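/- arXiv:1610.09775 — 2 statements merged into one kernel-verified Lean document; each statement's English description precedes it below -/
import Mathlib

section
/- Every generalized bicomposition α̃ that is not a bicomposition admits a unique decomposition α̃ = β̃ (0,0) γ, i.e. there exist a unique generalized bicomposition β̃ and a unique bicomposition γ such that α̃ is the concatenation of β̃, a single zero column (0,0), and γ. -/
open Finsupp

noncomputable section

/-- Generalized bicompositions: two rows of finitely supported natural numbers. -/
abbrev GBC : Type := (ℕ →₀ ℕ) × (ℕ →₀ ℕ)

/-- Monomials in the variables x₁,x₂,… (inl) and y₁,y₂,… (inr). -/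
abbrev Mon : Type := (ℕ ⊕ ℕ) →₀ ℕ

/-- The ring of formal power series ℚ[[x,y]]. -/
abbrev PS : Type := MvPowerSeries (ℕ ⊕ ℕ) ℚ

/-- The monomial X^α̃ associated to a generalized bicomposition. -/
def toMon (p : GBC) : Mon := Finsupp.sumElim p.1 p.2

/-- Length: the largest index (1-based count) of a nonzero column. -/
def len (p : GBC) : ℕ := (p.1.support ∪ p.2.support).sup (· + 1)

/-- Size: the sum of all entries. -/
def gsize (p : GBC) : ℕ := (p.1.sum fun _ v => v) + (p.2.sum fun _ v => v)

/-- A generalized bicomposition is a bicomposition when all columns before its length are nonzero. -/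
def IsBicomp (p : GBC) : Prop := ∀ k < len p, p.1 k ≠ 0 ∨ p.2 k ≠ 0

/-- Merge columns k and k+1 (0-based) of a row. -/
def mergeF (f : ℕ →₀ ℕ) (k : ℕ) : ℕ →₀ ℕ :=
  Finsupp.mapDomain (fun j => if j ≤ k then j else j - 1) f

/-- Merge columns k and k+1 (0-based) of a generalized bicomposition. -/
def mergeCol (p : GBC) (k : ℕ) : GBC := (mergeF p.1 k, mergeF p.2 k)

/-- `Covers p q` : q is obtained from the bicomposition p by one admissible column merge. -/
def Covers (p q : GBC) : Prop :=
  IsBicomp p ∧ ∃ k, k + 1 < len p ∧ (p.2 k = 0 ∨ p.1 (k + 1) = 0) ∧ q = mergeCol p k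

/-- The merge order ⪯ on bicompositions. -/
def bLE (p q : GBC) : Prop := Relation.ReflTransGen Covers p q

open Classical in
/-- Monomial diagonally quasisymmetric function M_α. -/
def Mfun (p : GBC) : PS :=
  fun m => if ∃ σ : ℕ → ℕ, StrictMono σ ∧
      m = toMon (Finsupp.mapDomain σ p.1, Finsupp.mapDomain σ p.2) then (1 : ℚ) else 0

/-- Fundamental diagonally quasisymmetric function F_α = Σ_{α ⪯ β} M_β. -/
def Ffun (p : GBC) : PS := ∑ᶠ (q : GBC) (_ : bLE p q), Mfun q

/-- Shift of a monomial: x_i ↦ x_{i+1}, y_i ↦ y_{i+1}. -/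
def shiftMon (m : Mon) : Mon := Finsupp.mapDomain (Sum.map Nat.succ Nat.succ) m

open Classical in
/-- The substitution x_i ↦ x_{i+1}, y_i ↦ y_{i+1} on power series. -/
def shiftPS (f : PS) : PS :=
  fun m => if h : ∃ m' : Mon, m = shiftMon m' then MvPowerSeries.coeff (R := ℚ) h.choose f else 0

/-- Shift a row d steps to the right. -/
def shiftF (d : ℕ) (f : ℕ →₀ ℕ) : ℕ →₀ ℕ := Finsupp.mapDomain (· + d) f

/-- Concatenation placing q starting at column m (0-based). -/
def concatAt (p q : GBC) (m : ℕ) : GBC := (p.1 + shiftF m q.1, p.2 + shiftF m q.2)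

/-- Decrease the top-left entry by 1. -/
def decX (q : GBC) : GBC := (Finsupp.update q.1 0 (q.1 0 - 1), q.2)

/-- Decrease the bottom-left entry by 1. -/
def decY (q : GBC) : GBC := (q.1, Finsupp.update q.2 0 (q.2 0 - 1))

/-- The defining recursion of the G family. -/
def GFam (G : GBC → PS) : Prop :=
  G 0 = 1 ∧
  (∀ p, IsBicomp p → G p = Ffun p) ∧
  (∀ p q m, len p ≤ m → IsBicomp q → q ≠ 0 → 0 < q.1 0 →
    G (concatAt p q (m + 1)) =
      G (concatAt p q m) - MvPowerSeries.X (Sum.inl m) * G (concatAt p (decX q) m)) ∧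
  (∀ p q m, len p ≤ m → IsBicomp q → q ≠ 0 → q.1 0 = 0 →
    G (concatAt p q (m + 1)) =
      G (concatAt p q m) - MvPowerSeries.X (Sum.inr m) * G (concatAt p (decY q) m))

lemma lt_len_of_ne {p : GBC} {j : ℕ} (hj : p.1 j ≠ 0 ∨ p.2 j ≠ 0) : j < len p := by
  have hmem : j ∈ p.1.support ∪ p.2.support := by
    rcases hj with hj | hj
    · exact Finset.mem_union_left _ (Finsupp.mem_support_iff.2 hj)
    · exact Finset.mem_union_right _ (Finsupp.mem_support_iff.2 hj)
  have h2 : j + 1 ≤ (p.1.support ∪ p.2.support).sup (· + 1) := Finset.le_sup (f := (· + 1)) hmem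
  have h3 : len p = (p.1.support ∪ p.2.support).sup (· + 1) := rfl
  omega

lemma len_le_of {p : GBC} {m : ℕ} (h : ∀ j, m ≤ j → p.1 j = 0 ∧ p.2 j = 0) :
    len p ≤ m := by
  apply Finset.sup_le
  intro j hj
  show j + 1 ≤ m
  by_contra hc
  have hm : m ≤ j := by omega
  rcases Finset.mem_union.1 hj with hj | hj
  · exact (Finsupp.mem_support_iff.1 hj) (h j hm).1
  · exact (Finsupp.mem_support_iff.1 hj) (h j hm).2

lemma zero_of_len_le {p : GBC} {m j : ℕ} (h : len p ≤ m) (hj : m ≤ j) :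
    p.1 j = 0 ∧ p.2 j = 0 := by
  constructor
  · by_contra hc
    have := lt_len_of_ne (p := p) (Or.inl hc)
    omega
  · by_contra hc
    have := lt_len_of_ne (p := p) (Or.inr hc)
    omega

lemma shiftF_apply_add (d : ℕ) (f : ℕ →₀ ℕ) (j : ℕ) : shiftF d f (j + d) = f j :=
  Finsupp.mapDomain_apply (fun a b hab => by omega) f j

lemma shiftF_apply_lt {d j : ℕ} (f : ℕ →₀ ℕ) (h : j < d) : shiftF d f j = 0 := by
  apply Finsupp.mapDomain_notin_range
  rintro ⟨a, ha⟩
  simp only at ha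
  omega

/-- every generalized bicomposition that is not a bicomposition decomposes
uniquely as β̃ (0,0) γ with γ a (nonzero) bicomposition. -/
theorem unique_zero_column_decomposition (α : GBC) (h : ¬ IsBicomp α) :
    ∃! bg : GBC × GBC, IsBicomp bg.2 ∧ bg.2 ≠ 0 ∧
      ∃ m : ℕ, len bg.1 ≤ m ∧ α = concatAt bg.1 bg.2 (m + 1) := by
  classical
  set L := len α with hLdef
  unfold IsBicomp at h
  push_neg at h
  obtain ⟨k0, hk0L, hk01, hk02⟩ := h
  set P : ℕ → Prop := fun k => α.1 k = 0 ∧ α.2 k = 0 with hPdef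
  set m : ℕ := Nat.findGreatest P (L - 1) with hmdef
  have hPm : P m := Nat.findGreatest_spec (m := k0) (by omega) ⟨hk01, hk02⟩
  have hmL1 : m ≤ L - 1 := Nat.findGreatest_le _
  have hmax : ∀ j, m < j → j < L → ¬ P j := fun j hj hjL =>
    Nat.findGreatest_is_greatest hj (by omega)
  -- the last column (index L-1) of α is nonzero
  have hcolL : ¬ P (L - 1) := by
    intro hP
    have hle : L ≤ L - 1 := len_le_of (p := α) (fun j hj => by
      rcases Nat.eq_or_lt_of_le hj with hj' | hj'
      · exact hj' ▸ hP
      · constructor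
        · by_contra hc
          have := lt_len_of_ne (p := α) (Or.inl hc); omega
        · by_contra hc
          have := lt_len_of_ne (p := α) (Or.inr hc); omega)
    omega
  have hmL : m < L - 1 := by
    have hne : m ≠ L - 1 := by
      intro he
      exact hcolL ⟨by rw [← he]; exact hPm.1, by rw [← he]; exact hPm.2⟩
    omega
  have hinj : Set.InjOn (fun j : ℕ => j + (m + 1)) ((fun j : ℕ => j + (m+1)) ⁻¹' ↑α.1.support) :=
    fun a _ b _ hab => by simp only at hab; omega
  have hinj2 : Set.InjOn (fun j : ℕ => j + (m + 1)) ((fun j : ℕ => j + (m+1)) ⁻¹' ↑α.2.support) :=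
    fun a _ b _ hab => by simp only at hab; omega
  set β : GBC := (α.1.filter (· < m), α.2.filter (· < m)) with hβdef
  set γ : GBC := (Finsupp.comapDomain _ α.1 hinj, Finsupp.comapDomain _ α.2 hinj2) with hγdef
  have hγ1 : ∀ j, γ.1 j = α.1 (j + (m + 1)) := fun j => Finsupp.comapDomain_apply _ _ _ _
  have hγ2 : ∀ j, γ.2 j = α.2 (j + (m + 1)) := fun j => Finsupp.comapDomain_apply _ _ _ _
  -- len γ ≤ L - (m+1)
  have hlenγ : len γ ≤ L - (m + 1) := by
    apply len_le_of
    intro j hj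
    rw [hγ1, hγ2]
    exact zero_of_len_le (p := α) le_rfl (by omega)
  refine ⟨(β, γ), ⟨?_, ?_, m, ?_, ?_⟩, ?_⟩
  · -- IsBicomp γ
    intro k hk
    have hk0 : k < len γ := hk
    have hk' : k + (m + 1) < L := by omega
    have := hmax (k + (m + 1)) (by omega) hk'
    simp only [hPdef] at this
    push_neg at this
    rw [hγ1, hγ2]
    by_cases hz : α.1 (k + (m + 1)) = 0
    · exact Or.inr (this hz)
    · exact Or.inl hz
  · -- γ ≠ 0
    intro hγ0
    apply hcolL
    have h1 : γ.1 = 0 := congrArg Prod.fst hγ0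
    have h2 : γ.2 = 0 := congrArg Prod.snd hγ0
    have e1 : γ.1 (L - 1 - (m + 1)) = 0 := by rw [h1]; rfl
    have e2 : γ.2 (L - 1 - (m + 1)) = 0 := by rw [h2]; rfl
    rw [hγ1] at e1
    rw [hγ2] at e2
    have harith : L - 1 - (m + 1) + (m + 1) = L - 1 := by omega
    rw [harith] at e1 e2
    exact ⟨e1, e2⟩
  · -- len β ≤ m
    apply len_le_of
    intro j hj
    constructor <;> · simp [hβdef, Finsupp.filter_apply]; omega
  · -- α = concatAt β γ (m+1)
    have key : ∀ (f : ℕ →₀ ℕ) (g : ℕ →₀ ℕ), (∀ j, g j = f (j + (m+1))) → f m = 0 →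
        f = f.filter (· < m) + shiftF (m + 1) g := by
      intro f g hg hfm
      ext j
      rw [Finsupp.add_apply, Finsupp.filter_apply]
      rcases Nat.lt_or_ge j (m + 1) with hj | hj
      · rw [shiftF_apply_lt _ hj]
        rcases Nat.lt_or_ge j m with hj' | hj'
        · simp [hj']
        · have : j = m := by omega
          subst this
          simp [hfm]
      · have : j = (j - (m+1)) + (m+1) := by omega
        rw [this, shiftF_apply_add, hg]
        simp only [if_neg (by omega : ¬ (j - (m+1) + (m+1) < m))]
        simp
    exact Prod.ext (key α.1 γ.1 hγ1 hPm.1) (key α.2 γ.2 hγ2 hPm.2)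
  · -- uniqueness
    rintro ⟨β', γ'⟩ ⟨hbc, hne, m', hm'len, hαeq⟩
    have hbc' : ∀ k, k < len γ' → γ'.1 k ≠ 0 ∨ γ'.2 k ≠ 0 := hbc
    replace hm'len : len β' ≤ m' := hm'len
    have hA1 : ∀ j, α.1 j = β'.1 j + shiftF (m' + 1) γ'.1 j := fun j => by
      rw [hαeq]; rfl
    have hA2 : ∀ j, α.2 j = β'.2 j + shiftF (m' + 1) γ'.2 j := fun j => by
      rw [hαeq]; rfl
    -- α beyond m' is given by γ'
    have hAγ1 : ∀ j, α.1 (j + (m' + 1)) = γ'.1 j := fun j => by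
      rw [hA1, shiftF_apply_add, (zero_of_len_le hm'len (by omega)).1, zero_add]
    have hAγ2 : ∀ j, α.2 (j + (m' + 1)) = γ'.2 j := fun j => by
      rw [hA2, shiftF_apply_add, (zero_of_len_le hm'len (by omega)).2, zero_add]
    -- column m' of α is zero
    have hPm' : P m' := by
      constructor
      · rw [hA1, shiftF_apply_lt _ (by omega), (zero_of_len_le hm'len le_rfl).1]
      · rw [hA2, shiftF_apply_lt _ (by omega), (zero_of_len_le hm'len le_rfl).2]
    -- m' < L - 1
    have hm'L : m' < L - 1 := by
      -- γ' ≠ 0 gives some nonzero column of γ'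
      have : ∃ j, γ'.1 j ≠ 0 ∨ γ'.2 j ≠ 0 := by
        by_contra hc
        push_neg at hc
        apply hne
        exact Prod.ext (Finsupp.ext fun j => (hc j).1) (Finsupp.ext fun j => (hc j).2)
      obtain ⟨j0, hj0⟩ := this
      have : j0 + (m' + 1) < L := by
        apply lt_len_of_ne
        rw [hAγ1, hAγ2]
        exact hj0
      have hm'lt : m' < L := by omega
      have hne2 : m' ≠ L - 1 := by
        intro he
        exact hcolL ⟨by rw [← he]; exact hPm'.1, by rw [← he]; exact hPm'.2⟩
      omega
    -- len γ' ≥ L - (m'+1)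
    have hlenγ' : L - (m' + 1) ≤ len γ' := by
      have hne1 : γ'.1 (L - 1 - (m' + 1)) ≠ 0 ∨ γ'.2 (L - 1 - (m' + 1)) ≠ 0 := by
        rw [← hAγ1, ← hAγ2]
        have harith : L - 1 - (m' + 1) + (m' + 1) = L - 1 := by omega
        rw [harith]
        simp only [hPdef] at hcolL
        push_neg at hcolL
        by_cases hz : α.1 (L - 1) = 0
        · exact Or.inr (hcolL hz)
        · exact Or.inl hz
      have := lt_len_of_ne hne1
      omega
    -- m' is also maximal among zero columns below L, hence m' = m
    have hm'max : ∀ j, m' < j → j < L → ¬ P j := by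
      intro j hj hjL hPj
      have hcol := hbc' (j - (m' + 1)) (by omega)
      rw [← hAγ1, ← hAγ2] at hcol
      have harith : j - (m' + 1) + (m' + 1) = j := by omega
      rw [harith] at hcol
      rcases hcol with hc | hc
      · exact hc hPj.1
      · exact hc hPj.2
    have hmm' : m' = m := by
      have h1 : m' ≤ m := Nat.le_findGreatest (by omega) hPm'
      rcases Nat.eq_or_lt_of_le h1 with h' | h'
      · exact h'
      · exact absurd hPm (hm'max m h' (by omega))
    subst hmm'
    -- now identify β' = β and γ' = γ
    have hβ'1 : β'.1 = β.1 := by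
      ext j
      rcases Nat.lt_or_ge j m with hj | hj
      · have := hA1 j
        rw [shiftF_apply_lt _ (by omega), add_zero] at this
        simp [hβdef, Finsupp.filter_apply, hj, ← this]
      · have hz : β.1 j = 0 := by
          simp only [hβdef, Finsupp.filter_apply]
          rw [if_neg (by omega)]
        rw [(zero_of_len_le hm'len hj).1, hz]
    have hβ'2 : β'.2 = β.2 := by
      ext j
      rcases Nat.lt_or_ge j m with hj | hj
      · have := hA2 j
        rw [shiftF_apply_lt _ (by omega), add_zero] at this
        simp [hβdef, Finsupp.filter_apply, hj, ← this]
      · have hz : β.2 j = 0 := by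
          simp only [hβdef, Finsupp.filter_apply]
          rw [if_neg (by omega)]
        rw [(zero_of_len_le hm'len hj).2, hz]
    have hγ'1 : γ'.1 = γ.1 := by
      ext j
      rw [← hAγ1, hγ1]
    have hγ'2 : γ'.2 = γ.2 := by
      ext j
      rw [← hAγ2, hγ2]
    exact Prod.ext (Prod.ext hβ'1 hβ'2) (Prod.ext hγ'1 hγ'2)
end
end

section
/- The number of bicompositions γ of size n−1 such that the total sum of the first k columns is strictly less than k for all 1 ≤ k ≤ ℓ(γ), and whose unique row-2 entry equal to 1 (with all other row-2 entries 0) occurs in the last column, equals the Catalan number C_{n−1} = (1/n)·binom(2n−2, n−1). Equivalently: the number of pairs (a_1,…,a_m; position m) where a_1,…,a_m ≥ 0, a_1+⋯+a_m = n−2, and a_1+⋯+a_k < k for all k, plus the constraint encoding a single y-entry 1 in column m, is counted by C_{n−1}. -/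
open Finsupp

noncomputable section

open Classical in
/-- Monomial diagonally quasisymmetric polynomial M_α in the 2n variables
x₁,…,xₙ (Sum.inl) and y₁,…,yₙ (Sum.inr). -/
def Mpoly (n : ℕ) (p : GBC) : MvPolynomial (Fin n ⊕ Fin n) ℚ :=
  ∑ σ ∈ Finset.univ.filter (fun σ : Fin (len p) → Fin n => StrictMono σ),
    MvPolynomial.monomial
      (∑ j : Fin (len p),
        (Finsupp.single (Sum.inl (σ j)) (p.1 j) + Finsupp.single (Sum.inr (σ j)) (p.2 j)))
      (1 : ℚ)

/-- Fundamental diagonally quasisymmetric polynomial F_α = Σ_{α ⪯ β} M_β in 2n variables. -/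
def Fpoly (n : ℕ) (p : GBC) : MvPolynomial (Fin n ⊕ Fin n) ℚ :=
  ∑ᶠ (q : GBC) (_ : bLE p q), Mpoly n q

/-- DQSym_n : the span of the M_α in 2n variables. -/
def DQSymN (n : ℕ) : Submodule ℚ (MvPolynomial (Fin n ⊕ Fin n) ℚ) :=
  Submodule.span ℚ {f | ∃ p : GBC, IsBicomp p ∧ f = Mpoly n p}

/-- I_n = ⟨DQSym_n⁺⟩ : the ideal generated by the diagonally quasisymmetric polynomials
with zero constant term. -/
def Idl (n : ℕ) : Ideal (MvPolynomial (Fin n ⊕ Fin n) ℚ) :=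
  Ideal.span {f | f ∈ DQSymN n ∧ MvPolynomial.coeff 0 f = 0}

/-- The exponent vector of X^α̃ in 2n variables (for ℓ(α̃) ≤ n). -/
def monN (n : ℕ) (p : GBC) : (Fin n ⊕ Fin n) →₀ ℕ :=
  ∑ j : Fin n, (Finsupp.single (Sum.inl j) (p.1 j) + Finsupp.single (Sum.inr j) (p.2 j))

/-- The monomial X^α̃ in 2n variables. -/
def XPow (n : ℕ) (p : GBC) : MvPolynomial (Fin n ⊕ Fin n) ℚ :=
  MvPolynomial.monomial (monN n p) 1

/-- B_n : generalized bicompositions of length ≤ n whose first k columns sum to < k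
for all 1 ≤ k ≤ n. -/
def Bset (n : ℕ) : Set GBC :=
  {p | len p ≤ n ∧ ∀ k, 1 ≤ k → k ≤ n → (∑ i ∈ Finset.range k, (p.1 i + p.2 i)) < k}

/-- Reverse of a row within the first n columns. -/
def revF (n : ℕ) (f : ℕ →₀ ℕ) : ℕ →₀ ℕ :=
  ∑ i ∈ Finset.range n, Finsupp.single (n - 1 - i) (f i)

/-- Reverse of a generalized bicomposition within the first n columns. -/
def revG (n : ℕ) (p : GBC) : GBC := (revF n p.1, revF n p.2)

/-- A_n : generalized bicompositions of length ≤ n whose reverse lies in B_n. -/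
def Aset (n : ℕ) : Set GBC := {p | len p ≤ n ∧ revG n p ∈ Bset n}


open List DyckStep

namespace CatAux

/-- Encode a list of nat (D-run lengths before each U) as a list of Dyck steps. -/
def Wd : List ℕ → List DyckStep
  | [] => []
  | (x :: xs) => List.replicate x D ++ U :: Wd xs

/-- Decode. -/
def dec : List DyckStep → List ℕ
  | [] => []
  | (U :: rest) => 0 :: dec rest
  | (D :: rest) => match dec rest with
    | [] => []
    | (x :: xs) => (x + 1) :: xs

lemma countU_Wd (l : List ℕ) : (Wd l).count U = l.length := by
  induction l with
  | nil => rfl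
  | cons x xs ih => simp [Wd, List.count_append, ih, List.count_replicate]

lemma countD_Wd (l : List ℕ) : (Wd l).count D = l.sum := by
  induction l with
  | nil => rfl
  | cons x xs ih => simp [Wd, List.count_append, ih, List.count_replicate, Nat.add_comm]

lemma Wd_append (l₁ l₂ : List ℕ) : Wd (l₁ ++ l₂) = Wd l₁ ++ Wd l₂ := by
  induction l₁ with
  | nil => rfl
  | cons x xs ih => simp [Wd, ih]

lemma dec_replicate (t : ℕ) : dec (List.replicate t D) = [] := by
  induction t with
  | zero => rfl
  | succ t ih => simp [List.replicate_succ, dec, ih]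

lemma dec_repl_cons (j : ℕ) (w : List DyckStep) (x : ℕ) (xs : List ℕ)
    (h : dec w = x :: xs) : dec (List.replicate j D ++ w) = (x + j) :: xs := by
  induction j with
  | zero => simpa using h
  | succ j ih =>
      rw [List.replicate_succ, List.cons_append]
      simp only [dec, ih]
      rw [show x + (j+1) = (x + j) + 1 by omega]

lemma dec_Wd (l : List ℕ) (r : List DyckStep) : dec (Wd l ++ r) = l ++ dec r := by
  induction l with
  | nil => rfl
  | cons x xs ih =>
      have h : dec (U :: (Wd xs ++ r)) = 0 :: (xs ++ dec r) := by simp [dec, ih]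
      have := dec_repl_cons x (U :: (Wd xs ++ r)) 0 (xs ++ dec r) h
      simpa [Wd] using this

lemma struct (w : List DyckStep) : ∃ t, w = Wd (dec w) ++ List.replicate t D := by
  induction w with
  | nil => exact ⟨0, rfl⟩
  | cons s rest ih =>
      obtain ⟨t, ht⟩ := ih
      cases s with
      | U => exact ⟨t, by simp [dec, Wd]; exact ht⟩
      | D =>
          rcases hd : dec rest with _ | ⟨x, xs⟩
          · refine ⟨t + 1, ?_⟩
            rw [hd] at ht
            simp only [dec, hd]
            simp [Wd, List.replicate_succ]
            simpa [Wd] using ht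
          · refine ⟨t, ?_⟩
            simp only [dec, hd]
            rw [hd] at ht
            simp only [Wd, List.replicate_succ, List.cons_append] at ht ⊢
            rw [ht]

/-- Dyck prefix property with slack `c`. -/
lemma prefix_le (l : List ℕ) (c : ℕ) (h : ∀ k < l.length, (l.take (k+1)).sum ≤ k + c) :
    ∀ i, ((Wd l).take i).count D ≤ ((Wd l).take i).count U + c := by
  induction l generalizing c with
  | nil => intro i; simp [Wd]
  | cons x xs ih =>
      intro i
      have hx : x ≤ c := by simpa using h 0 (by simp)
      by_cases hi : i ≤ x
      · rw [Wd, List.take_append_of_le_length (by simpa using hi)]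
        simp [List.count_replicate, List.take_replicate]
        omega
      · push_neg at hi
        have h1 : (List.replicate x D).length = x := by simp
        rw [Wd, List.take_append, List.count_append, List.count_append]
        have h2 : i - (List.replicate x D).length = i - x := by simp
        rw [h2]
        obtain ⟨j, hj⟩ : ∃ j, i - x = j + 1 := ⟨i - x - 1, by omega⟩
        rw [hj]
        simp only [List.take_succ_cons, List.count_cons]
        have ihx := ih (c + 1 - x) (fun k hk => by
          have := h (k+1) (by simpa using Nat.succ_lt_succ hk)
          simp only [List.take_succ_cons, List.sum_cons] at this
          omega) j
        simp only [List.take_replicate, List.count_replicate, List.length_replicate,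
          List.count_cons, beq_self_eq_true, if_true, beq_iff_eq, reduceCtorEq, if_false]
        omega

/-- Full word. -/
def fullWord (m : ℕ) (l : List ℕ) : List DyckStep := Wd l ++ List.replicate (m - l.sum) D

lemma fullWord_dyck (m : ℕ) (l : List ℕ) (hlen : l.length = m)
    (h : ∀ k < m, (l.take (k+1)).sum ≤ k) :
    ((fullWord m l).count U = (fullWord m l).count D) ∧
    (∀ i, ((fullWord m l).take i).count D ≤ ((fullWord m l).take i).count U) := by
  have hsum : l.sum ≤ m := by
    rcases Nat.eq_zero_or_pos m with hm | hm
    · subst hm; rw [List.length_eq_zero_iff] at hlen; simp [hlen]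
    · have := h (m - 1) (by omega)
      rw [show m - 1 + 1 = m by omega, ← hlen, List.take_length] at this
      omega
  constructor
  · simp [fullWord, List.count_append, countU_Wd, countD_Wd, List.count_replicate, hlen]
    omega
  · intro i
    by_cases hi : i ≤ (Wd l).length
    · rw [fullWord, List.take_append_of_le_length hi]
      simpa using prefix_le l 0 (fun k hk => by simpa using h k (hlen ▸ hk)) i
    · push_neg at hi
      rw [fullWord, List.take_append,
        List.take_of_length_le (le_of_lt hi), List.count_append, List.count_append]
      have : ((List.replicate (m - l.sum) D).take (i - (Wd l).length)).count D ≤ m - l.sum := by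
        calc _ ≤ (List.replicate (m - l.sum) D).count D := (List.take_sublist _ _).count_le _
        _ = m - l.sum := by simp
      simp only [countU_Wd, countD_Wd, hlen]
      have hU : ((List.replicate (m - l.sum) D).take (i - (Wd l).length)).count U = 0 := by
        simp [List.take_replicate, List.count_replicate]
      omega


lemma length_Wd (l : List ℕ) : (Wd l).length = l.length + l.sum := by
  induction l with
  | nil => rfl
  | cons x xs ih => simp [Wd, ih]; omega

lemma sum_le_of_cond {m : ℕ} {l : List ℕ} (hlen : l.length = m)
    (h : ∀ k < m, (l.take (k+1)).sum ≤ k) : l.sum ≤ m := by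
  rcases Nat.eq_zero_or_pos m with hm | hm
  · subst hm; rw [List.length_eq_zero_iff] at hlen; simp [hlen]
  · have := h (m - 1) (by omega)
    rw [show m - 1 + 1 = m by omega, ← hlen, List.take_length] at this
    omega

lemma countU_eq_length_dec (w : List DyckStep) : w.count U = (dec w).length := by
  obtain ⟨t, ht⟩ := struct w
  conv_lhs => rw [ht]
  simp [List.count_append, countU_Wd, List.count_replicate]

/-- The seq set as a subtype. -/
def SeqT (m : ℕ) : Type := {l : List ℕ // l.length = m ∧ ∀ k < m, (l.take (k+1)).sum ≤ k}

def seqEquiv (m : ℕ) : SeqT m ≃ {p : DyckWord // p.semilength = m} where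
  toFun := fun ⟨l, hlen, h⟩ =>
    ⟨⟨fullWord m l, (fullWord_dyck m l hlen h).1, (fullWord_dyck m l hlen h).2⟩, by
      simp [DyckWord.semilength, fullWord, List.count_append, countU_Wd,
        List.count_replicate, hlen]⟩
  invFun := fun ⟨p, hp⟩ => by
    refine ⟨dec p.toList, ?_, ?_⟩
    · rw [← countU_eq_length_dec]; exact hp
    · intro k hk
      obtain ⟨t, ht⟩ := struct p.toList
      set l := dec p.toList with hl
      have hlen : l.length = m := by rw [hl, ← countU_eq_length_dec]; exact hp
      have hkl : k < l.length := hlen ▸ hk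
      have hdecomp : l = l.take k ++ (l[k] :: l.drop (k+1)) := by
        rw [← List.drop_eq_getElem_cons hkl, List.take_append_drop]
      set P : List DyckStep := Wd (l.take k) ++ List.replicate l[k] D with hP
      have hw : p.toList = P ++ (U :: Wd (l.drop (k+1)) ++ List.replicate t D) := by
        rw [ht]
        conv_lhs => rw [hdecomp]
        rw [Wd_append]
        simp [Wd, hP]
      have htake : p.toList.take P.length = P := by
        rw [hw, List.take_left]
      have hd := p.count_D_le_count_U P.length
      rw [htake] at hd
      have hcU : P.count U = k := by
        simp [hP, List.count_append, countU_Wd, List.count_replicate,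
          List.length_take, min_eq_left hkl.le]
      have hcD : P.count D = (l.take (k+1)).sum := by
        have h1 : (l.take (k+1)).sum = (l.take k).sum + l[k] := by
          rw [← List.take_concat_get' l k hkl, List.sum_append]; simp
        simp [hP, List.count_append, countD_Wd, List.count_replicate, h1]
      rw [hcU, hcD] at hd
      exact hd
  left_inv := fun ⟨l, hlen, h⟩ => by
    apply Subtype.ext
    show dec (fullWord m l) = l
    rw [fullWord, dec_Wd, dec_replicate, List.append_nil]
  right_inv := fun ⟨p, hp⟩ => by
    apply Subtype.ext
    apply DyckWord.ext
    show fullWord m (dec p.toList) = p.toList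
    obtain ⟨t, ht⟩ := struct p.toList
    set l := dec p.toList with hl
    have hsum : p.toList.count D = l.sum + t := by
      conv_lhs => rw [ht]
      simp [List.count_append, countD_Wd, List.count_replicate]
    have hU : p.toList.count U = l.length := countU_eq_length_dec _
    have hUD := p.count_U_eq_count_D
    have hm : l.length = m := hU ▸ hp
    have hts : m - l.sum = t := by omega
    rw [fullWord, hts, ← ht]

lemma card_seqT (m : ℕ) : Nat.card (SeqT m) = catalan m := by
  rw [Nat.card_congr (seqEquiv m), Nat.card_eq_fintype_card,
    DyckWord.card_dyckWord_semilength_eq_catalan]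

end CatAux

namespace CatAux

lemma len_le_iff {p : GBC} {N : ℕ} : len p ≤ N ↔ ∀ j, N ≤ j → p.1 j = 0 ∧ p.2 j = 0 := by
  rw [len, Finset.sup_le_iff]
  constructor
  · intro h j hj
    constructor
    · by_contra h0
      have := h j (Finset.mem_union_left _ (Finsupp.mem_support_iff.2 h0)); omega
    · by_contra h0
      have := h j (Finset.mem_union_right _ (Finsupp.mem_support_iff.2 h0)); omega
  · intro h j hj
    rw [Finset.mem_union, Finsupp.mem_support_iff, Finsupp.mem_support_iff] at hj
    by_contra hN
    obtain ⟨h1, h2⟩ := h j (by omega)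
    tauto

lemma le_len₂ {p : GBC} {j : ℕ} (h : p.2 j ≠ 0) : j + 1 ≤ len p :=
  Finset.le_sup (f := (· + 1)) (Finset.mem_union_right _ (Finsupp.mem_support_iff.2 h))

lemma gsize_eq {p : GBC} {N : ℕ} (h : len p ≤ N) :
    gsize p = ∑ i ∈ Finset.range N, (p.1 i + p.2 i) := by
  have h1 : p.1.support ⊆ Finset.range N := by
    intro j hj
    rw [Finsupp.mem_support_iff] at hj
    rw [Finset.mem_range]
    by_contra hN
    exact hj (len_le_iff.1 h j (by omega)).1
  have h2 : p.2.support ⊆ Finset.range N := by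
    intro j hj
    rw [Finsupp.mem_support_iff] at hj
    rw [Finset.mem_range]
    by_contra hN
    exact hj (len_le_iff.1 h j (by omega)).2
  rw [gsize, Finsupp.sum_of_support_subset p.1 h1 (fun _ v => v) (by simp),
    Finsupp.sum_of_support_subset p.2 h2 (fun _ v => v) (by simp),
    ← Finset.sum_add_distrib]

lemma sum_single_lt {n k : ℕ} (h : k ≤ n - 1) :
    ∑ i ∈ Finset.range k, (Finsupp.single (n-1) (1:ℕ)) i = 0 := by
  apply Finset.sum_eq_zero
  intro i hi
  rw [Finset.mem_range] at hi
  exact Finsupp.single_eq_of_ne (by omega)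

lemma sum_single_full {n : ℕ} (h : 1 ≤ n) :
    ∑ i ∈ Finset.range n, (Finsupp.single (n-1) (1:ℕ)) i = 1 := by
  rw [show n = (n-1) + 1 by omega, Finset.sum_range_succ, sum_single_lt (by omega)]
  simp

lemma mem_S_iff {n : ℕ} (hn : 2 ≤ n) {p : GBC} :
    (p ∈ Bset n ∧ gsize p = n - 1 ∧ p.2 = Finsupp.single (len p - 1) 1) ↔
    (p.2 = Finsupp.single (n-1) 1 ∧ (∀ j, n ≤ j → p.1 j = 0) ∧
     (∑ i ∈ Finset.range n, p.1 i) = n - 2 ∧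
     ∀ k, 1 ≤ k → k ≤ n - 1 → (∑ i ∈ Finset.range k, p.1 i) < k) := by
  constructor
  · rintro ⟨⟨hle, hB⟩, hg, h2⟩
    have h21 : p.2 (len p - 1) ≠ 0 := by rw [h2]; simp
    have hL1 : 1 ≤ len p := by have := le_len₂ h21; omega
    have hsum_all : ∑ i ∈ Finset.range (len p), (p.1 i + p.2 i) = n - 1 := by
      rw [← gsize_eq le_rfl, hg]
    have hcond := hB (len p) hL1 hle
    rw [hsum_all] at hcond
    have hlen : len p = n := by omega
    rw [hlen] at h2
    have hsn : ∑ i ∈ Finset.range n, (p.1 i + p.2 i) = n - 1 := by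
      rw [← gsize_eq hle, hg]
    rw [Finset.sum_add_distrib] at hsn
    have hs2 : ∑ i ∈ Finset.range n, p.2 i = 1 := by
      rw [h2]; exact sum_single_full (by omega)
    refine ⟨h2, fun j hj => (len_le_iff.1 hle j hj).1, by omega, ?_⟩
    intro k hk1 hk2
    have := hB k hk1 (by omega)
    rw [Finset.sum_add_distrib] at this
    have hz : ∑ i ∈ Finset.range k, p.2 i = 0 := by rw [h2]; exact sum_single_lt hk2
    omega
  · rintro ⟨h2, h0, hs, hp⟩
    have h2ne : p.2 (n-1) ≠ 0 := by rw [h2]; simp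
    have hge : n ≤ len p := by have := le_len₂ h2ne; omega
    have hle : len p ≤ n := by
      apply len_le_iff.2
      intro j hj
      refine ⟨h0 j hj, ?_⟩
      rw [h2]
      exact Finsupp.single_eq_of_ne (by omega)
    have hlen : len p = n := le_antisymm hle hge
    have hsize : gsize p = n - 1 := by
      rw [gsize_eq hle, Finset.sum_add_distrib, hs, h2, sum_single_full (by omega)]
      omega
    refine ⟨⟨hle, ?_⟩, hsize, by rw [hlen]; exact h2⟩
    intro k hk1 hk2
    rw [Finset.sum_add_distrib, h2]
    by_cases hk : k ≤ n - 1
    · rw [sum_single_lt hk]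
      have := hp k hk1 hk
      omega
    · have hkn : k = n := by omega
      rw [hkn, sum_single_full (by omega), hs]
      omega

lemma sum_map_range (f : ℕ → ℕ) (k : ℕ) :
    ((List.range k).map f).sum = ∑ i ∈ Finset.range k, f i := by
  induction k with
  | zero => simp
  | succ k ih => rw [List.range_succ, Finset.sum_range_succ, ← ih]; simp

lemma sum_take_eq (l : List ℕ) (k : ℕ) (hk : k ≤ l.length) :
    (l.take k).sum = ∑ i ∈ Finset.range k, l.getD i 0 := by
  induction k with
  | zero => simp
  | succ k ih =>
      have hk' : k < l.length := by omega
      rw [← List.take_concat_get' l k hk', List.sum_append, Finset.sum_range_succ,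
        ih (by omega), List.getD_eq_getElem l 0 hk']
      simp

/-- Forward map to lists. -/
def toL (n : ℕ) (p : GBC) : List ℕ := (List.range (n-1)).map (fun i => p.1 i)

/-- Backward map from lists. -/
def ofL (n : ℕ) (l : List ℕ) : GBC :=
  ((∑ i ∈ Finset.range (n-1), Finsupp.single i (l.getD i 0)) +
    Finsupp.single (n-1) (n - 2 - l.sum),
   Finsupp.single (n-1) 1)

lemma ofL_apply1 (n : ℕ) (l : List ℕ) (j : ℕ) : (ofL n l).1 j =
    (if j < n-1 then l.getD j 0 else 0) + (if n-1 = j then n - 2 - l.sum else 0) := by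
  rw [ofL]
  simp only [Finsupp.add_apply]
  congr 1
  · rw [Finsupp.finset_sum_apply]
    simp [Finsupp.single_apply, Finset.sum_ite_eq', Finset.mem_range]
  · rw [Finsupp.single_apply]

lemma ofL_mem (n : ℕ) (hn : 2 ≤ n) (l : List ℕ) (hlen : l.length = n-1)
    (hcond : ∀ k < n-1, (l.take (k+1)).sum ≤ k) :
    ofL n l ∈ {p : GBC | p ∈ Bset n ∧ gsize p = n - 1 ∧
      p.2 = Finsupp.single (len p - 1) 1} := by
    have hsuml : l.sum ≤ n - 2 := by
      have := hcond (n-2) (by omega)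
      rw [show n-2+1 = n-1 by omega, ← hlen, List.take_length] at this
      omega
    apply (mem_S_iff hn).2
    refine ⟨rfl, ?_, ?_, ?_⟩
    · intro j hj
      rw [ofL_apply1]
      rw [if_neg (by omega), if_neg (by omega)]
    · rw [show Finset.range n = Finset.range ((n-1)+1) by congr 1; omega,
        Finset.sum_range_succ]
      have hmid : ∀ i ∈ Finset.range (n-1), (ofL n l).1 i = l.getD i 0 := by
        intro i hi
        rw [Finset.mem_range] at hi
        rw [ofL_apply1, if_pos hi, if_neg (by omega)]
        omega
      rw [Finset.sum_congr rfl hmid, ← sum_take_eq l (n-1) (by omega), ← hlen,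
        List.take_length, ofL_apply1, if_neg (by omega), if_pos (by omega)]
      omega
    · intro k hk1 hk2
      have hmid : ∀ i ∈ Finset.range k, (ofL n l).1 i = l.getD i 0 := by
        intro i hi
        rw [Finset.mem_range] at hi
        rw [ofL_apply1, if_pos (by omega), if_neg (by omega)]
        omega
      rw [Finset.sum_congr rfl hmid, ← sum_take_eq l k (by omega)]
      have := hcond (k-1) (by omega)
      rw [show k-1+1 = k by omega] at this
      omega

lemma toL_ofL (n : ℕ) (hn : 2 ≤ n) (l : List ℕ) (hlen : l.length = n-1)
    (hcond : ∀ k < n-1, (l.take (k+1)).sum ≤ k) :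
    toL n (ofL n l) = l := by
    apply List.ext_getElem
    · simp [toL, hlen]
    · intro i h1 h2
      have hi : i < n - 1 := by simpa [toL] using h1
      have : (toL n (ofL n l))[i] = (ofL n l).1 i := by
        simp [toL]
      rw [this, ofL_apply1, if_pos hi, if_neg (by omega),
        List.getD_eq_getElem l 0 (by omega)]
      omega

def mainEquiv (n : ℕ) (hn : 2 ≤ n) :
    {p : GBC | p ∈ Bset n ∧ gsize p = n - 1 ∧ p.2 = Finsupp.single (len p - 1) 1} ≃
      SeqT (n-1) where
  toFun x := ⟨toL n x.1, by simp [toL], by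
    intro k hk
    obtain ⟨h2, h0, hs, hp⟩ := (mem_S_iff hn).1 x.2
    have h4 := hp (k+1) (by omega) (by omega)
    rw [toL, ← List.map_take, List.take_range, min_eq_left (by omega), sum_map_range]
    omega⟩
  invFun x := ⟨ofL n x.1, ofL_mem n hn x.1 x.2.1 x.2.2⟩
  left_inv x := by
    obtain ⟨p, hp⟩ := x
    apply Subtype.ext
    show ofL n (toL n p) = p
    obtain ⟨h2, h0, hs, hcond⟩ := (mem_S_iff hn).1 hp
    have hgetD : ∀ j, j < n - 1 → (toL n p).getD j 0 = p.1 j := by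
      intro j hj
      rw [List.getD_eq_getElem _ _ (by simp [toL]; omega)]
      simp [toL]
    have hsum : (toL n p).sum = ∑ i ∈ Finset.range (n-1), p.1 i := sum_map_range _ _
    have hdec : ∑ i ∈ Finset.range n, p.1 i
        = ∑ i ∈ Finset.range (n-1), p.1 i + p.1 (n-1) := by
      rw [show Finset.range n = Finset.range ((n-1)+1) by congr 1; omega,
        Finset.sum_range_succ]
    apply Prod.ext
    · apply Finsupp.ext
      intro j
      rw [show (ofL n (toL n p)).1 j = _ from ofL_apply1 n (toL n p) j]
      rcases lt_trichotomy j (n-1) with hj | hj | hj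
      · rw [if_pos hj, if_neg (by omega), hgetD j hj]
        omega
      · subst hj
        rw [if_neg (by omega), if_pos rfl, hsum]
        omega
      · rw [if_neg (by omega), if_neg (by omega), h0 j (by omega)]
    · show Finsupp.single (n-1) 1 = p.2
      exact h2.symm
  right_inv x := Subtype.ext (toL_ofL n hn x.1 x.2.1 x.2.2)

end CatAux

/-- the number of generalized bicompositions of size n−1 lying in B_n whose
row 2 is a single entry 1 located in the last column equals the Catalan number
C_{n−1} = (1/n)·binom(2n−2, n−1). -/
theorem catalan_count_last_column (n : ℕ) (hn : 2 ≤ n) :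
    Set.ncard {p : GBC | p ∈ Bset n ∧ gsize p = n - 1 ∧
        p.2 = Finsupp.single (len p - 1) 1} = catalan (n - 1) ∧
    n * catalan (n - 1) = Nat.choose (2 * n - 2) (n - 1) := by
  constructor
  · rw [← Nat.card_coe_set_eq, Nat.card_congr (CatAux.mainEquiv n hn),
      CatAux.card_seqT]
  · have h := succ_mul_catalan_eq_centralBinom (n-1)
    rw [show n - 1 + 1 = n by omega] at h
    rw [h, Nat.centralBinom]
    congr 1
    omega
end
end
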